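/- arXiv:0909.4978 — 2 statements merged into one kernel-verified Lean document; each statement's English description precedes it below -/
import Mathlib

section
/- Let A be a unital C*-algebra, let φ be a tracial state on A, and let u, v ∈ A be unitaries satisfying u·v = λ·v·u for some complex number λ ≠ 1. Then (1 − |φ(u)|²) + (1 − |φ(v)|²) ≥ 3 − √5. -/
/-!
Traciality turns `u v = λ v u` into `φ (u v) = λ φ (u v)`, so `φ (u v) = 0` when `λ ≠ 1`. Hence
`u⋆` and `v` are orthonormal for the semi-inner product `⟪a, b⟫ = φ (a⋆ b)`, and Bessel's
inequality for the vector `1` gives `|φ u|² + |φ v|² ≤ 1`, which is stronger than the claim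
because `3 - √5 < 1`.
-/

open scoped ComplexOrder

theorem map_mul_eq_zero_of_mul_eq_smul_mul {𝕜 A : Type*} [Field 𝕜] [Ring A] [Algebra 𝕜 A]
    {φ : A →ₗ[𝕜] 𝕜} (hφtr : ∀ a b : A, φ (a * b) = φ (b * a)) {u v : A} {lam : 𝕜}
    (hlam : lam ≠ 1) (hcomm : u * v = lam • (v * u)) : φ (u * v) = 0 := by
  have h : (1 - lam) * φ (u * v) = 0 := by
    rw [sub_mul, one_mul, sub_eq_zero]
    conv_lhs => rw [hcomm, map_smul, smul_eq_mul, hφtr]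
  exact (mul_eq_zero.mp h).resolve_left (sub_ne_zero.mpr hlam.symm)

section PositiveFunctional

variable {A : Type*} [Ring A] [StarRing A] [Algebra ℂ A] [StarModule ℂ A]
  {φ : A →ₗ[ℂ] ℂ}

theorem map_star_of_nonneg_star_mul_self (hφ1 : φ 1 = 1) (hφpos : ∀ a : A, 0 ≤ φ (star a * a))
    (a : A) : φ (star a) = starRingEnd ℂ (φ a) := by
  have him (x : A) : (φ (star x * x)).im = 0 := (Complex.nonneg_iff.mp (hφpos x)).2.symm
  have h₁ := him (1 + a)
  have h₂ := him (1 + Complex.I • a)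
  simp only [star_add, star_one, mul_add, mul_one, add_mul, one_mul, map_add, hφ1,
    Complex.add_im, Complex.one_im, zero_add, him a, add_zero, star_smul, RCLike.star_def,
    Complex.conj_I, neg_smul, Algebra.mul_smul_comm, neg_mul, Algebra.smul_mul_assoc, smul_add,
    smul_neg, map_neg, map_smul, smul_eq_mul, Complex.neg_im, Complex.mul_im, Complex.I_re,
    zero_mul, Complex.I_im, mul_zero, Complex.mul_re, sub_self, neg_zero] at h₁ h₂
  apply Complex.ext <;> simp only [Complex.conj_re, Complex.conj_im] <;> linarith

theorem sq_norm_map_add_sq_norm_map_le_one (hφ1 : φ 1 = 1)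
    (hφpos : ∀ a : A, 0 ≤ φ (star a * a)) {u v : A} (hu : u * star u = 1) (hv : star v * v = 1)
    (huv : φ (u * v) = 0) : ‖φ u‖ ^ 2 + ‖φ v‖ ^ 2 ≤ 1 := by
  have hstar := map_star_of_nonneg_star_mul_self hφ1 hφpos
  have hvu : φ (star v * star u) = 0 := by rw [← star_mul, hstar, huv, map_zero]
  -- the residual of `1` after projecting onto the orthonormal pair `u⋆`, `v`
  set x := 1 - φ u • star u - starRingEnd ℂ (φ v) • v
  have hx : φ (star x * x) = ((1 - (‖φ u‖ ^ 2 + ‖φ v‖ ^ 2) : ℝ) : ℂ) := by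
    simp only [x, star_sub, star_one, star_smul, star_star, Complex.star_def, Complex.conj_conj,
      sub_mul, mul_sub, one_mul, mul_one, smul_mul_assoc, mul_smul_comm, hu, hv,
      map_sub, map_smul, smul_eq_mul, hφ1, huv, hvu, hstar u, hstar v]
    push_cast
    rw [← Complex.mul_conj', ← Complex.mul_conj']
    ring
  have hx_nonneg := hφpos x
  rw [hx, Complex.zero_le_real] at hx_nonneg
  linarith

end PositiveFunctional

theorem tracial_state_lambda_commuting_unitaries_bound_general
    {A : Type*} [NormedRing A] [StarRing A]
    [NormedAlgebra ℂ A] [StarModule ℂ A]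
    (φ : A →ₗ[ℂ] ℂ)
    (hφ1 : φ 1 = 1)
    (hφpos : ∀ a : A, 0 ≤ φ (star a * a))
    (hφtr : ∀ a b : A, φ (a * b) = φ (b * a))
    (u v : A)
    (hu₂ : u * star u = 1)
    (hv₁ : star v * v = 1)
    (lam : ℂ) (hlam : lam ≠ 1) (hcomm : u * v = lam • (v * u)) :
    (1 - ‖φ u‖ ^ 2) + (1 - ‖φ v‖ ^ 2) ≥ 3 - Real.sqrt 5 := by
  have huv := map_mul_eq_zero_of_mul_eq_smul_mul hφtr hlam hcomm
  have hbessel := sq_norm_map_add_sq_norm_map_le_one hφ1 hφpos hu₂ hv₁ huv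
  have hsqrt5 : 2 ≤ Real.sqrt 5 := Real.le_sqrt_of_sq_le (by norm_num)
  linarith

/-- For a tracial state `φ` on a unital C*-algebra `A` and unitaries
`u, v ∈ A` with `u v = λ v u` for some `λ ≠ 1`, one has
`(1 - |φ u|²) + (1 - |φ v|²) ≥ 3 - √5`. -/
theorem tracial_state_lambda_commuting_unitaries_bound
    {A : Type*} [NormedRing A] [StarRing A] [CStarRing A]
    [NormedAlgebra ℂ A] [CompleteSpace A] [StarModule ℂ A]
    (φ : A →ₗ[ℂ] ℂ)
    (hφ1 : φ 1 = 1)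
    (hφpos : ∀ a : A, 0 ≤ φ (star a * a))
    (hφtr : ∀ a b : A, φ (a * b) = φ (b * a))
    (u v : A)
    (hu₁ : star u * u = 1) (hu₂ : u * star u = 1)
    (hv₁ : star v * v = 1) (hv₂ : v * star v = 1)
    (lam : ℂ) (hlam : lam ≠ 1) (hcomm : u * v = lam • (v * u)) :
    (1 - ‖φ u‖ ^ 2) + (1 - ‖φ v‖ ^ 2) ≥ 3 - Real.sqrt 5 :=
  tracial_state_lambda_commuting_unitaries_bound_general φ hφ1 hφpos hφtr u v hu₂ hv₁ lam hlam hcomm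
end

section
/- Let t and s be real numbers with 0 ≤ t ≤ s and (1 − t)(1 − s) ≤ t. Then t + s ≥ 3 − √5. -/
/-- If `0 ≤ t ≤ s` and `(1 - t)(1 - s) ≤ t`, then `t + s ≥ 3 - √5`. -/
theorem elementary_inequality (t s : ℝ) (ht : 0 ≤ t) (hts : t ≤ s)
    (h : (1 - t) * (1 - s) ≤ t) : t + s ≥ 3 - Real.sqrt 5 := by
  have h5 : Real.sqrt 5 ^ 2 = 5 := Real.sq_sqrt (by norm_num)
  have h2 : (2:ℝ) ≤ Real.sqrt 5 := by
    nlinarith [Real.sqrt_nonneg 5]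
  nlinarith [sq_nonneg (t - s), sq_nonneg (t + s - 3 + Real.sqrt 5), sq_nonneg (t + s)]
end
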